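/- Let n ≥ 1, let R be a commutative ring, let x_1, …, x_n be invertible elements of R with x̄_i := x_i^{−1}, and let a = (a_1, a_2, …) be any sequence in R. Then det_{1≤i,j≤n} ( x_i·(x_i|a)^{n−j} − x̄_i·(x̄_i|a)^{n−j} ) = ∏_{i=1}^n (x_i − x̄_i) · ∏_{1≤i<j≤n} (x_i + x̄_i − x_j − x̄_j); in particular this determinant is independent of the sequence a. -/

import Mathlib

/-!
Since `x * x⁻¹ = 1`, the antisymmetrization `x (x|a)^m - x⁻¹ (x⁻¹|a)^m` is `x - x⁻¹` times a
monic polynomial of degree `m` in `x + x⁻¹`; these polynomials are built together with the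
companion quotients of `(x|a)^m - (x⁻¹|a)^m` by a two-term recursion. Pulling the factor
`x_i - x_i⁻¹` out of each row leaves the matrix of a monic polynomial family evaluated at the
points `x_i + x_i⁻¹`, whose determinant is the Vandermonde product.
-/

open Finset

noncomputable def geom {R : Type*} [CommRing R] (x : R) : PowerSeries R :=
  PowerSeries.mk fun k => x ^ k

noncomputable def lin {R : Type*} [CommRing R] (a : R) : PowerSeries R :=
  1 + PowerSeries.C a * PowerSeries.X

noncomputable def facpow {R : Type*} [CommRing R] (x : R) (a : ℕ → R) (m : ℕ) : R :=
  ∏ j ∈ Finset.range m, (x + a (j + 1))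

noncomputable def hgl {R : Type*} [CommRing R] {n : ℕ} (x : Fin n → R) (a : ℕ → R) (m : ℤ) : R :=
  if 0 ≤ m then
    PowerSeries.coeff m.toNat
      ((∏ i, geom (x i)) * ∏ j ∈ Finset.range (n + m.toNat - 1), lin (a (j + 1)))
  else 0

noncomputable def hsp {R : Type*} [CommRing R] {n : ℕ} (x : Fin n → Rˣ) (a : ℕ → R) (m : ℤ) : R :=
  if 0 ≤ m then
    PowerSeries.coeff m.toNat
      ((∏ i, geom ((x i : R)) * geom (((x i)⁻¹ : Rˣ) : R)) *
        ∏ j ∈ Finset.range (n + m.toNat - 1), lin (a (j + 1)))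
  else 0

noncomputable def hoo {R : Type*} [CommRing R] {n : ℕ} (x : Fin n → Rˣ) (a : ℕ → R) (m : ℤ) : R :=
  if 0 ≤ m then
    PowerSeries.coeff m.toNat
      ((1 + PowerSeries.X) * (∏ i, geom ((x i : R)) * geom (((x i)⁻¹ : Rˣ) : R)) *
        ∏ j ∈ Finset.range (n + m.toNat - 1), lin (a (j + 1)))
  else 0

noncomputable def heo {R : Type*} [CommRing R] {n : ℕ} (x : Fin n → Rˣ) (a : ℕ → R) (m : ℤ) : R :=
  if 0 ≤ m then
    if h : n = 1 then
      (PowerSeries.coeff m.toNat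
        ((geom ((x ⟨0, by omega⟩ : Rˣ) : R) + geom (((x ⟨0, by omega⟩)⁻¹ : Rˣ) : R)) *
          ∏ j ∈ Finset.range m.toNat, lin (a (j + 1))))
        - (if m = 0 then 1 else 0)
    else
      PowerSeries.coeff m.toNat
        ((1 - PowerSeries.X ^ 2) * (∏ i, geom ((x i : R)) * geom (((x i)⁻¹ : Rˣ) : R)) *
          ∏ j ∈ Finset.range (n + m.toNat - 1), lin (a (j + 1)))
  else 0

noncomputable def heod {R : Type*} [CommRing R] {n : ℕ} (x : Fin n → Rˣ) (a : ℕ → R) (m : ℤ) : R :=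
  if 0 < m then
    if h : 0 < n then
      PowerSeries.coeff m.toNat
        ((geom ((x ⟨0, h⟩ : Rˣ) : R) - geom (((x ⟨0, h⟩)⁻¹ : Rˣ) : R)) *
          (∏ i ∈ Finset.univ.filter (fun i : Fin n => i ≠ ⟨0, h⟩),
            geom ((x i : R)) * geom (((x i)⁻¹ : Rˣ) : R)) *
          ∏ j ∈ Finset.range (n + m.toNat - 1), lin (a (j + 1)))
    else 0
  else 0

open Polynomial

/-- The recursion comes from multiplying the identities of `facpowAntisymQuot_eval` by
`x + a (m + 1)` and using `x y = 1`. -/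
noncomputable def facpowAntisymQuot {R : Type*} [CommRing R] (a : ℕ → R) : ℕ → R[X] × R[X]
  | 0 => (1, 0)
  | m + 1 => ((X + C (a (m + 1))) * (facpowAntisymQuot a m).1 - (facpowAntisymQuot a m).2,
      (facpowAntisymQuot a m).1 + C (a (m + 1)) * (facpowAntisymQuot a m).2)

section facpowAntisymQuot

variable {R : Type*} [CommRing R] (a : ℕ → R)

lemma facpowAntisymQuot_monic_degree [Nontrivial R] (m : ℕ) :
    (facpowAntisymQuot a m).1.Monic ∧ (facpowAntisymQuot a m).1.degree = m ∧
      (facpowAntisymQuot a m).2.degree < m := by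
  induction m with
  | zero => simp [facpowAntisymQuot]
  | succ m ih =>
    obtain ⟨hmonic, hdeg, hlt⟩ := ih
    set P := (facpowAntisymQuot a m).1
    set Q := (facpowAntisymQuot a m).2
    have hmonic' : ((X + C (a (m + 1))) * P).Monic := (monic_X_add_C _).mul hmonic
    have hdeg' : ((X + C (a (m + 1))) * P).degree = ((m + 1 : ℕ) : WithBot ℕ) := by
      rw [hmonic.degree_mul, degree_X_add_C, hdeg]
      norm_cast
      omega
    have hm : (m : WithBot ℕ) < ((m + 1 : ℕ) : WithBot ℕ) := by exact_mod_cast Nat.lt_succ_self m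
    have hQ : Q.degree < ((X + C (a (m + 1))) * P).degree := hdeg' ▸ hlt.trans hm
    refine ⟨hmonic'.sub_of_left hQ, (degree_sub_eq_left_of_degree_lt hQ).trans hdeg', ?_⟩
    calc (P + C (a (m + 1)) * Q).degree ≤ max P.degree (C (a (m + 1)) * Q).degree :=
          degree_add_le _ _
      _ ≤ m := max_le hdeg.le (by rw [← smul_eq_C_mul]; exact (degree_smul_le _ _).trans hlt.le)
      _ < (m + 1 : ℕ) := hm

lemma facpowAntisymQuot_eval {x y : R} (hxy : x * y = 1) (m : ℕ) :
    x * facpow x a m - y * facpow y a m = (x - y) * (facpowAntisymQuot a m).1.eval (x + y) ∧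
      facpow x a m - facpow y a m = (x - y) * (facpowAntisymQuot a m).2.eval (x + y) := by
  induction m with
  | zero => simp [facpow, facpowAntisymQuot]
  | succ m ih =>
    simp only [facpow, Finset.prod_range_succ, facpowAntisymQuot, eval_sub, eval_add, eval_mul,
      eval_X, eval_C]
    simp only [facpow] at ih
    constructor
    · linear_combination (x + y + a (m + 1)) * ih.1 - ih.2
        + (∏ j ∈ range m, (y + a (j + 1)) - ∏ j ∈ range m, (x + a (j + 1))) * hxy
    · linear_combination ih.1 + a (m + 1) * ih.2

end facpowAntisymQuot

lemma Matrix.det_eval_rev_eq_prod_sub {R : Type*} [CommRing R] {n : ℕ} (v : Fin n → R)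
    (p : Fin n → R[X]) (h_deg : ∀ i, (p i).natDegree = i) (h_monic : ∀ i, (p i).Monic) :
    (Matrix.of fun i j => (p (Fin.rev j)).eval (v i)).det =
      ∏ i : Fin n, ∏ j ∈ Ioi i, (v i - v j) := by
  calc (Matrix.of fun i j => (p (Fin.rev j)).eval (v i)).det
      = ((Matrix.of fun i j => (p j).eval (v (Fin.rev i))).submatrix
          Fin.revPerm Fin.revPerm).det := by
        congr 1; ext i j; simp
    _ = (Matrix.vandermonde (v ∘ Fin.rev)).det := by
        rw [Matrix.det_submatrix_equiv_self,
          Matrix.det_eval_matrixOfPolynomials_eq_det_vandermonde _ p h_deg h_monic]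
        rfl
    _ = ((Matrix.projVandermonde 1 v).submatrix Fin.revPerm Fin.revPerm).det := by
        congr 1; ext i j; simp [Matrix.projVandermonde_apply]
    _ = ∏ i : Fin n, ∏ j ∈ Ioi i, (v i - v j) := by
        simp [Matrix.det_submatrix_equiv_self, Matrix.det_projVandermonde]

theorem factorial_sp_denominator {R : Type*} [CommRing R] (n : ℕ)
    (x : Fin n → Rˣ) (a : ℕ → R) :
    Matrix.det (Matrix.of fun i j : Fin n =>
        (x i : R) * facpow ((x i : R)) a (n - 1 - (j : ℕ))
          - (((x i)⁻¹ : Rˣ) : R) * facpow ((((x i)⁻¹ : Rˣ) : R)) a (n - 1 - (j : ℕ))) =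
      (∏ i : Fin n, ((x i : R) - (((x i)⁻¹ : Rˣ) : R))) *
        ∏ i : Fin n, ∏ j ∈ Finset.Ioi i,
          ((x i : R) + (((x i)⁻¹ : Rˣ) : R) - (x j : R) - (((x j)⁻¹ : Rˣ) : R)) := by
  rcases subsingleton_or_nontrivial R with hR | hR
  · exact Subsingleton.elim _ _
  set P : Fin n → R[X] := fun j => (facpowAntisymQuot a j).1
  have hrow : ∀ i j : Fin n,
      (x i : R) * facpow (x i : R) a (n - 1 - j)
        - (((x i)⁻¹ : Rˣ) : R) * facpow (((x i)⁻¹ : Rˣ) : R) a (n - 1 - j) =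
      ((x i : R) - (((x i)⁻¹ : Rˣ) : R)) *
        (P (Fin.rev j)).eval ((x i : R) + (((x i)⁻¹ : Rˣ) : R)) := fun i j => by
    have hrev : n - 1 - j = (Fin.rev j : ℕ) := by rw [Fin.val_rev]; omega
    rw [hrev, (facpowAntisymQuot_eval a (x i).mul_inv _).1]
  simp_rw [hrow]
  refine (Matrix.det_mul_column (fun i => (x i : R) - (((x i)⁻¹ : Rˣ) : R))
    (Matrix.of fun i j => (P (Fin.rev j)).eval ((x i : R) + (((x i)⁻¹ : Rˣ) : R)))).trans ?_
  rw [Matrix.det_eval_rev_eq_prod_sub _ P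
      (fun j => natDegree_eq_of_degree_eq_some (facpowAntisymQuot_monic_degree a j).2.1)
      (fun j => (facpowAntisymQuot_monic_degree a j).1)]
  congr 1
  exact prod_congr rfl fun i _ => prod_congr rfl fun j _ => by ring
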